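/- Let μ, ν be probability measures on ℝ with finite first moments and CDFs F_μ, F_ν. Then the 1-Wasserstein distance satisfies W₁(μ, ν) = ∫_ℝ |F_μ(x) − F_ν(x)| dx. -/

import Mathlib

open MeasureTheory Filter Topology ENNReal

/-- The 1-Wasserstein distance between two Borel measures on `ℝ`, as the infimum of the
transport cost `∫ |x - y| dπ` over all probability couplings `π` of `μ` and `ν`
(with value in `ℝ≥0∞`). -/
noncomputable def W1 (μ ν : Measure ℝ) : ℝ≥0∞ :=
  sInf {r : ℝ≥0∞ | ∃ π : Measure (ℝ × ℝ), IsProbabilityMeasure π ∧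
    π.map Prod.fst = μ ∧ π.map Prod.snd = ν ∧ r = ∫⁻ p, edist p.1 p.2 ∂π}

/-!
Writing `|x - y| = ∫ (1[x ≤ t < y] + 1[y ≤ t < x]) dt` and using Tonelli, the cost of a coupling
`π` is `∫ (π {x ≤ t < y} + π {y ≤ t < x}) dt`, and since the marginals of `π` are `μ` and `ν` the
integrand dominates `|F_μ t - F_ν t|`. The quantile coupling `u ↦ (F_μ⁻¹ u, F_ν⁻¹ u)`, `u` uniform
on `(0, 1)`, attains this bound for every `t` because `F⁻¹ u ≤ t ↔ u ≤ F t`. Finite first moments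
make the common value finite, so it is also the Bochner integral.
-/

open ProbabilityTheory Set

/-- Only the values on `(0, 1)` are meaningful: outside, the set is empty or unbounded below. -/
noncomputable def quantile (μ : Measure ℝ) (u : ℝ) : ℝ := sInf {x | u ≤ cdf μ x}

section Quantile

variable (μ : Measure ℝ) {u : ℝ}

lemma bddBelow_setOf_le_cdf (hu : 0 < u) : BddBelow {x | u ≤ cdf μ x} := by
  obtain ⟨z, hz⟩ := eventually_atBot.1 ((tendsto_cdf_atBot μ).eventually (eventually_lt_nhds hu))
  exact ⟨z, fun x hx => le_of_not_gt fun hxz => (hz x hxz.le).not_ge hx⟩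

lemma nonempty_setOf_le_cdf (hu : u < 1) : {x | u ≤ cdf μ x}.Nonempty :=
  ((tendsto_cdf_atTop μ).eventually (eventually_ge_nhds hu)).exists

lemma le_cdf_quantile (hu : u ∈ Ioo 0 1) : u ≤ cdf μ (quantile μ u) := by
  have hbdd := bddBelow_setOf_le_cdf μ hu.1
  have hne := nonempty_setOf_le_cdf μ hu.2
  rw [quantile, (monotone_cdf μ).monotoneOn _ |>.map_csInf_of_continuousWithinAt
    (((cdf μ).right_continuous _).mono fun x hx => csInf_le hbdd hx) hne hbdd]
  exact le_csInf (hne.image _) (forall_mem_image.2 fun _ hx => hx)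

lemma quantile_le_iff (hu : u ∈ Ioo 0 1) {x : ℝ} : quantile μ u ≤ x ↔ u ≤ cdf μ x :=
  ⟨fun h => (le_cdf_quantile μ hu).trans (monotone_cdf μ h),
    fun h => csInf_le (bddBelow_setOf_le_cdf μ hu.1) h⟩

lemma monotoneOn_quantile : MonotoneOn (quantile μ) (Ioo 0 1) :=
  fun _ hu _ hv huv => (quantile_le_iff μ hu).2 (huv.trans (le_cdf_quantile μ hv))

lemma aemeasurable_quantile : AEMeasurable (quantile μ) (volume.restrict (Ioo 0 1)) :=
  aemeasurable_restrict_of_monotoneOn measurableSet_Ioo (monotoneOn_quantile μ)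

end Quantile

lemma volume_Ioc_inter_Ioo {a b : ℝ} (ha : 0 ≤ a) (hb : b ≤ 1) :
    volume (Ioc a b ∩ Ioo 0 1) = ENNReal.ofReal (b - a) := by
  rw [measure_congr ((ae_eq_refl _).inter Ioo_ae_eq_Ioc), Ioc_inter_Ioc, max_eq_left ha,
    min_eq_left hb, Real.volume_Ioc]

lemma map_quantile (μ : Measure ℝ) [IsProbabilityMeasure μ] :
    (volume.restrict (Ioo 0 1)).map (quantile μ) = μ := by
  refine Measure.ext_of_Iic _ _ fun t => ?_
  have hpre : quantile μ ⁻¹' Iic t ∩ Ioo 0 1 = Ioc 0 (cdf μ t) ∩ Ioo 0 1 := by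
    ext u
    simp only [mem_inter_iff, mem_preimage, mem_Iic, mem_Ioc]
    exact ⟨fun ⟨h, hu⟩ => ⟨⟨hu.1, (quantile_le_iff μ hu).1 h⟩, hu⟩,
      fun ⟨h, hu⟩ => ⟨(quantile_le_iff μ hu).2 h.2, hu⟩⟩
  rw [Measure.map_apply_of_aemeasurable (aemeasurable_quantile μ) measurableSet_Iic,
    Measure.restrict_apply' measurableSet_Ioo, hpre, volume_Ioc_inter_Ioo le_rfl (cdf_le_one μ t),
    sub_zero, ofReal_cdf]

lemma ofReal_sub_add_ofReal_sub (a b : ℝ) :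
    ENNReal.ofReal (a - b) + ENNReal.ofReal (b - a) = ENNReal.ofReal |a - b| := by
  rcases le_total a b with h | h
  · rw [ofReal_of_nonpos (sub_nonpos.2 h), zero_add, abs_sub_comm, abs_of_nonneg (sub_nonneg.2 h)]
  · rw [ofReal_of_nonpos (sub_nonpos.2 h), add_zero, abs_of_nonneg (sub_nonneg.2 h)]

lemma edist_eq_volume_Ico_add_volume_Ico (x y : ℝ) :
    edist x y = volume (Ico x y) + volume (Ico y x) := by
  rw [Real.volume_Ico, Real.volume_Ico, add_comm, ofReal_sub_add_ofReal_sub, edist_dist,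
    Real.dist_eq]

lemma measurableSet_setOf_le_lt {α : Type*} [MeasurableSpace α] {f g : α → ℝ}
    (hf : Measurable f) (hg : Measurable g) :
    MeasurableSet {z : α × ℝ | f z.1 ≤ z.2 ∧ z.2 < g z.1} :=
  (measurableSet_le (hf.comp measurable_fst) measurable_snd).inter
    (measurableSet_lt measurable_snd (hg.comp measurable_fst))

lemma lintegral_volume_Ico {α : Type*} [MeasurableSpace α] (π : Measure α) [SFinite π]
    {f g : α → ℝ} (hf : Measurable f) (hg : Measurable g) :
    ∫⁻ a, volume (Ico (f a) (g a)) ∂π = ∫⁻ t, π {a | f a ≤ t ∧ t < g a} :=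
  (Measure.prod_apply (measurableSet_setOf_le_lt hf hg)).symm.trans
    (Measure.prod_apply_symm (measurableSet_setOf_le_lt hf hg))

lemma lintegral_edist_eq_lintegral_measure (π : Measure (ℝ × ℝ)) [SFinite π] :
    ∫⁻ p, edist p.1 p.2 ∂π =
      ∫⁻ t, (π {p | p.1 ≤ t ∧ t < p.2} + π {p | p.2 ≤ t ∧ t < p.1}) := by
  have hmeas : Measurable fun t => π {p | p.1 ≤ t ∧ t < p.2} :=
    measurable_measure_prodMk_right (measurableSet_setOf_le_lt measurable_fst measurable_snd)
  simp_rw [edist_eq_volume_Ico_add_volume_Ico]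
  rw [lintegral_add_left' (by simp only [Real.volume_Ico]; fun_prop), lintegral_add_left hmeas,
    lintegral_volume_Ico π measurable_fst measurable_snd,
    lintegral_volume_Ico π measurable_snd measurable_fst]

lemma measureReal_map_le_add {α β : Type*} [MeasurableSpace α] [MeasurableSpace β]
    (π : Measure α) [IsFiniteMeasure π] {f g : α → β} (hf : Measurable f) (hg : Measurable g)
    {s : Set β} (hs : MeasurableSet s) :
    (π.map f).real s ≤ (π.map g).real s + π.real {a | f a ∈ s ∧ g a ∉ s} := by
  rw [map_measureReal_apply hf hs, map_measureReal_apply hg hs]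
  calc π.real (f ⁻¹' s) ≤ π.real (g ⁻¹' s ∪ {a | f a ∈ s ∧ g a ∉ s}) :=
        measureReal_mono fun a ha => by by_cases h : g a ∈ s <;> simp_all
    _ ≤ _ := measureReal_union_le _ _

lemma abs_cdf_sub_le (π : Measure (ℝ × ℝ)) [IsFiniteMeasure π] {μ ν : Measure ℝ}
    [IsProbabilityMeasure μ] [IsProbabilityMeasure ν]
    (hμ : π.map Prod.fst = μ) (hν : π.map Prod.snd = ν) (t : ℝ) :
    |cdf μ t - cdf ν t| ≤ π.real {p | p.1 ≤ t ∧ t < p.2} + π.real {p | p.2 ≤ t ∧ t < p.1} := by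
  have h₁ := measureReal_map_le_add π measurable_fst measurable_snd (measurableSet_Iic (a := t))
  have h₂ := measureReal_map_le_add π measurable_snd measurable_fst (measurableSet_Iic (a := t))
  simp only [mem_Iic, not_le, hμ, hν, ← cdf_eq_real] at h₁ h₂
  rw [abs_sub_le_iff]
  constructor <;> linarith [measureReal_nonneg (μ := π) (s := {p : ℝ × ℝ | p.1 ≤ t ∧ t < p.2}),
    measureReal_nonneg (μ := π) (s := {p : ℝ × ℝ | p.2 ≤ t ∧ t < p.1})]

lemma volume_setOf_quantile_le_lt (μ ν : Measure ℝ) (t : ℝ) :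
    volume ({u | quantile μ u ≤ t ∧ t < quantile ν u} ∩ Ioo 0 1) =
      ENNReal.ofReal (cdf μ t - cdf ν t) := by
  have hpre : {u | quantile μ u ≤ t ∧ t < quantile ν u} ∩ Ioo 0 1 =
      Ioc (cdf ν t) (cdf μ t) ∩ Ioo 0 1 := by
    ext u
    simp only [mem_inter_iff, mem_ofPred_eq, mem_Ioc, and_congr_left_iff]
    intro hu
    rw [quantile_le_iff μ hu, ← not_le, quantile_le_iff ν hu, not_le, and_comm]
  rw [hpre, volume_Ioc_inter_Ioo (cdf_nonneg ν t) (cdf_le_one μ t)]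

noncomputable def quantileCoupling (μ ν : Measure ℝ) : Measure (ℝ × ℝ) :=
  (volume.restrict (Ioo 0 1)).map fun u => (quantile μ u, quantile ν u)

lemma aemeasurable_quantile_prod (μ ν : Measure ℝ) :
    AEMeasurable (fun u => (quantile μ u, quantile ν u)) (volume.restrict (Ioo 0 1)) :=
  (aemeasurable_quantile μ).prodMk (aemeasurable_quantile ν)

instance (μ ν : Measure ℝ) : IsProbabilityMeasure (quantileCoupling μ ν) :=
  have : IsProbabilityMeasure (volume.restrict (Ioo (0 : ℝ) 1)) := ⟨by simp⟩
  Measure.isProbabilityMeasure_map (aemeasurable_quantile_prod μ ν)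

lemma quantileCoupling_map_fst (μ ν : Measure ℝ) [IsProbabilityMeasure μ] :
    (quantileCoupling μ ν).map Prod.fst = μ := by
  rw [quantileCoupling, AEMeasurable.map_map_of_aemeasurable measurable_fst.aemeasurable
    (aemeasurable_quantile_prod μ ν)]
  exact map_quantile μ

lemma quantileCoupling_map_snd (μ ν : Measure ℝ) [IsProbabilityMeasure ν] :
    (quantileCoupling μ ν).map Prod.snd = ν := by
  rw [quantileCoupling, AEMeasurable.map_map_of_aemeasurable measurable_snd.aemeasurable
    (aemeasurable_quantile_prod μ ν)]
  exact map_quantile ν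

lemma lintegral_edist_quantileCoupling (μ ν : Measure ℝ) :
    ∫⁻ p, edist p.1 p.2 ∂quantileCoupling μ ν = ∫⁻ t, ENNReal.ofReal |cdf μ t - cdf ν t| := by
  rw [lintegral_edist_eq_lintegral_measure]
  refine lintegral_congr fun t => ?_
  have hA : MeasurableSet {p : ℝ × ℝ | p.1 ≤ t ∧ t < p.2} :=
    (measurableSet_le measurable_fst measurable_const).inter
      (measurableSet_lt measurable_const measurable_snd)
  have hB : MeasurableSet {p : ℝ × ℝ | p.2 ≤ t ∧ t < p.1} :=
    (measurableSet_le measurable_snd measurable_const).inter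
      (measurableSet_lt measurable_const measurable_fst)
  rw [quantileCoupling, Measure.map_apply_of_aemeasurable (aemeasurable_quantile_prod μ ν) hA,
    Measure.map_apply_of_aemeasurable (aemeasurable_quantile_prod μ ν) hB,
    Measure.restrict_apply' measurableSet_Ioo, Measure.restrict_apply' measurableSet_Ioo]
  exact (congrArg₂ (· + ·) (volume_setOf_quantile_le_lt μ ν t)
    (volume_setOf_quantile_le_lt ν μ t)).trans (ofReal_sub_add_ofReal_sub _ _)

theorem W1_eq_lintegral_abs_cdf_sub (μ ν : Measure ℝ) [IsProbabilityMeasure μ]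
    [IsProbabilityMeasure ν] :
    W1 μ ν = ∫⁻ t, ENNReal.ofReal |cdf μ t - cdf ν t| := by
  refine le_antisymm (sInf_le ⟨quantileCoupling μ ν, inferInstance,
    quantileCoupling_map_fst μ ν, quantileCoupling_map_snd μ ν,
    (lintegral_edist_quantileCoupling μ ν).symm⟩) (le_sInf ?_)
  rintro _ ⟨π, hπ, hμ, hν, rfl⟩
  rw [lintegral_edist_eq_lintegral_measure]
  refine lintegral_mono fun t => ?_
  calc ENNReal.ofReal |cdf μ t - cdf ν t|
      ≤ ENNReal.ofReal (π.real {p | p.1 ≤ t ∧ t < p.2} + π.real {p | p.2 ≤ t ∧ t < p.1}) :=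
        ENNReal.ofReal_le_ofReal (abs_cdf_sub_le π hμ hν t)
    _ = _ := by rw [ENNReal.ofReal_add measureReal_nonneg measureReal_nonneg,
        ofReal_measureReal, ofReal_measureReal]

lemma lintegral_edist_lt_top {μ ν : Measure ℝ} (π : Measure (ℝ × ℝ))
    (hπμ : π.map Prod.fst = μ) (hπν : π.map Prod.snd = ν)
    (hμ : Integrable id μ) (hν : Integrable id ν) :
    ∫⁻ p, edist p.1 p.2 ∂π < ∞ := by
  rw [← hπμ, integrable_map_measure aestronglyMeasurable_id measurable_fst.aemeasurable] at hμ
  rw [← hπν, integrable_map_measure aestronglyMeasurable_id measurable_snd.aemeasurable] at hν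
  simp_rw [edist_eq_enorm_sub]
  exact (hμ.sub hν).hasFiniteIntegral

lemma integrable_abs_cdf_sub {μ ν : Measure ℝ} [IsProbabilityMeasure μ] [IsProbabilityMeasure ν]
    (hμ : Integrable id μ) (hν : Integrable id ν) :
    Integrable fun t => |cdf μ t - cdf ν t| := by
  refine ⟨((monotone_cdf μ).measurable.sub (monotone_cdf ν).measurable).abs.aestronglyMeasurable,
    ?_⟩
  rw [hasFiniteIntegral_iff_ofReal (ae_of_all _ fun t => abs_nonneg _),
    ← lintegral_edist_quantileCoupling]
  exact lintegral_edist_lt_top _ (quantileCoupling_map_fst μ ν) (quantileCoupling_map_snd μ ν)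
    hμ hν

/-- For probability measures on `ℝ` with finite first moments, the 1-Wasserstein distance
equals the `L¹` distance between the cumulative distribution functions. -/
theorem W1_eq_integral_abs_cdf_sub
    (μ ν : Measure ℝ) [IsProbabilityMeasure μ] [IsProbabilityMeasure ν]
    (hμ : Integrable id μ) (hν : Integrable id ν) :
    W1 μ ν = ENNReal.ofReal
      (∫ x, |(μ (Set.Iic x)).toReal - (ν (Set.Iic x)).toReal|) := by
  simp only [← measureReal_def, ← cdf_eq_real]
  rw [W1_eq_lintegral_abs_cdf_sub, ofReal_integral_eq_lintegral_ofReal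
    (integrable_abs_cdf_sub hμ hν) (ae_of_all _ fun t => abs_nonneg _)]
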